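/- With G and G' as in the gadget construction (one n-source gadget per vertex of G, shared sources for edges of G), the graph G has a Hamiltonian path if and only if there exists a pebbling strategy in the (2,1)-I/O model with partial computations that eliminates all edges of G' with total cost at most n² + n + 1, where n = |V(G)|. -/

import Mathlib

/-! The Red-Blue Pebble Game with partial computations, in the `(M,1)`-I/O model.
A pebble on a vertex means the corresponding word is in the cache; a blue pebble is a
"dirty" partial result that must be stored (cost 1) before it can leave the cache. -/

inductive Pebble : Type
  | red
  | blue
deriving DecidableEq

/-- A configuration: the remaining (not yet computed) edges of the DAG, and the pebble
(if any) on each vertex. -/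
structure Config (V : Type) where
  edges : Finset (V × V)
  peb : V → Option Pebble

variable {V : Type} [DecidableEq V] [Fintype V]

/-- The number of pebbles currently on the graph. -/
def pebCount (c : Config V) : ℕ :=
  (Finset.univ.filter fun v => (c.peb v).isSome).card

/-- One move of the game with at most `M` pebbles, together with its cost:
(R1) place a red pebble on an empty vertex, cost 1 (LOAD);
(R2) remove a red pebble, cost 0 (REMOVE), or change red to blue, cost 0;
(R3) change a blue pebble to red, cost 1 (STORE);
(R4) if `u` is a leaf and both `u` and `v` are pebbled, delete the edge `(u,v)` for free,
     and the pebble on `v` becomes blue (partial COMPUTE);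
(R5) at most `M` pebbles are on the graph at any time. -/
inductive Step (M : ℕ) : Config V → Config V → ℕ → Prop
  | load (c : Config V) (v : V) (h : c.peb v = none) (hM : pebCount c < M) :
      Step M c ⟨c.edges, Function.update c.peb v (some Pebble.red)⟩ 1
  | remove (c : Config V) (v : V) (h : c.peb v = some Pebble.red) :
      Step M c ⟨c.edges, Function.update c.peb v none⟩ 0
  | toBlue (c : Config V) (v : V) (h : c.peb v = some Pebble.red) :
      Step M c ⟨c.edges, Function.update c.peb v (some Pebble.blue)⟩ 0
  | store (c : Config V) (v : V) (h : c.peb v = some Pebble.blue) :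
      Step M c ⟨c.edges, Function.update c.peb v (some Pebble.red)⟩ 1
  | compute (c : Config V) (u v : V) (he : (u, v) ∈ c.edges)
      (hleaf : ∀ x, (x, u) ∉ c.edges)
      (hu : (c.peb u).isSome) (hv : (c.peb v).isSome) :
      Step M c ⟨c.edges.erase (u, v), Function.update c.peb v (some Pebble.blue)⟩ 0

/-- `Reach M c c' k`: configuration `c'` is reachable from `c` by a pebbling strategy of
total cost `k`. -/
inductive Reach (M : ℕ) : Config V → Config V → ℕ → Prop
  | refl (c : Config V) : Reach M c c 0
  | tail {a b c : Config V} {k1 k2 : ℕ} :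
      Reach M a b k1 → Step M b c k2 → Reach M a c (k1 + k2)

/-- The set of costs of pebbling strategies that, starting from the DAG with edge set `E`
and an empty cache, delete all edges and store all results (no dirty blue pebble
remains). -/
def Achievable (M : ℕ) (E : Finset (V × V)) : Set ℕ :=
  {k | ∃ c' : Config V, Reach M ⟨E, fun _ => none⟩ c' k ∧
    c'.edges = ∅ ∧ ∀ v, c'.peb v ≠ some Pebble.blue}

/-- The source vertex `s_{ij}` of gadget `g_i`, as an index: when `v_i` and `v_j` are
adjacent in `G`, the sources `s_{ij}` and `s_{ji}` are merged into the single canonical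
(sorted) pair; otherwise `s_{ij}` is the private source `(i, j)`. -/
def src {n : ℕ} (G : SimpleGraph (Fin n)) [DecidableRel G.Adj] (i j : Fin n) :
    Fin n × Fin n :=
  if G.Adj i j ∧ j < i then (j, i) else (i, j)

/-- The edge set of the bipartite DAG `G'` built from `G`: vertices are the targets `t_i`
(`Sum.inl i`) and the sources (`Sum.inr` of an index pair); for every `i` and `j` there is
an edge from the source `s_{ij}` to the target `t_i`. -/
def gadgetEdges {n : ℕ} (G : SimpleGraph (Fin n)) [DecidableRel G.Adj] :
    Finset ((Fin n ⊕ Fin n × Fin n) × (Fin n ⊕ Fin n × Fin n)) :=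
  Finset.univ.image fun p : Fin n × Fin n => (Sum.inr (src G p.1 p.2), Sum.inl p.1)

/-!
Lower bound: on a bipartite DAG, account for a play of the `(2,1)` game edge by edge. Computing
an edge is charged 3 (load its source, load its target, store its target), less 1 when the
previously computed edge had the same source and less 2 when it had the same target. On `G'`
there are `n²` edges and `n` targets; consecutive computed edges share at most one endpoint and
the targets come in at least `n` runs, so a cost of at most `n² + n + 1` forces exactly `n` runs
of targets, each joined to the next by a shared source, that is, by an edge of `G`. The runs
then form a Hamiltonian path.

Upper bound: follow a Hamiltonian path. Each gadget is entered through the source it shares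
with its predecessor and left through the source it shares with its successor. This costs
`n + 1` per gadget, and `n + 2` for the first.
-/

open Finset Function

namespace Reach

variable {M : ℕ} {a b c : Config V} {k k' : ℕ}

theorem trans (h : Reach M a b k) (h' : Reach M b c k') : Reach M a c (k + k') := by
  induction h' with
  | refl => exact h
  | tail _ s ih => rw [← Nat.add_assoc]; exact ih.tail s

theorem single (h : Step M a b k) : Reach M a b k := by
  simpa using (Reach.refl a).tail h

end Reach

def pebbled (f : V → Option Pebble) : Finset V :=
  univ.filter fun v => (f v).isSome

theorem pebbled_update_some (f : V → Option Pebble) (v : V) (p : Pebble) :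
    pebbled (update f v (some p)) = insert v (pebbled f) := by
  ext w; by_cases hw : w = v <;> simp [pebbled, hw]

theorem pebbled_update_none (f : V → Option Pebble) (v : V) :
    pebbled (update f v none) = (pebbled f).erase v := by
  ext w; by_cases hw : w = v <;> simp [pebbled, hw]

theorem pebbled_update_of_isSome {f : V → Option Pebble} {v : V} (hv : (f v).isSome)
    (p : Pebble) : pebbled (update f v (some p)) = pebbled f := by
  rw [pebbled_update_some, insert_eq_of_mem (by simpa [pebbled] using hv)]

theorem Step.pebCount_le {M k : ℕ} {c c' : Config V} (h : Step M c c' k)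
    (hc : pebCount c ≤ M) : pebCount c' ≤ M := by
  change #(pebbled c'.peb) ≤ M
  cases h with
  | load v _ hM => rw [pebbled_update_some]; exact (card_insert_le _ _).trans hM
  | remove v _ => rw [pebbled_update_none]; exact card_erase_le.trans hc
  | toBlue v h | store v h => rwa [pebbled_update_of_isSome (by simp [h])]
  | compute u v _ _ _ hv => rwa [pebbled_update_of_isSome hv]

theorem Reach.pebCount_le {M k : ℕ} {c c' : Config V} (h : Reach M c c' k)
    (hc : pebCount c ≤ M) : pebCount c' ≤ M := by
  induction h with
  | refl => exact hc
  | tail _ s ih => exact s.pebCount_le ih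

def pebbleAt (v : V) (p : Pebble) : V → Option Pebble :=
  update (fun _ => none) v (some p)

theorem pebbled_pebbleAt (v : V) (p : Pebble) : pebbled (pebbleAt v p) = {v} := by
  rw [pebbleAt, pebbled_update_some]
  simp [pebbled]

theorem pebCount_pebbleAt (E : Finset (V × V)) (v : V) (p : Pebble) :
    pebCount (⟨E, pebbleAt v p⟩ : Config V) = 1 := by
  show #(pebbled _) = 1
  rw [pebbled_pebbleAt, card_singleton]

theorem pebbleAt_ne_blue {W : Type} [DecidableEq W] (v w : W) :
    pebbleAt v .red w ≠ some .blue := by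
  by_cases hw : w = v <;> simp [pebbleAt, hw]

theorem reach_pebbleAt_blue {M : ℕ} (hM : 1 ≤ M) (E : Finset (V × V)) (v : V) :
    Reach M ⟨E, fun _ => none⟩ ⟨E, pebbleAt v .blue⟩ 1 := by
  have hload := Step.load (M := M) ⟨E, fun _ => none⟩ v rfl (by simp [pebCount]; omega)
  have hblue := Step.toBlue (M := M) ⟨E, pebbleAt v .red⟩ v (by simp [pebbleAt])
  simpa [pebbleAt] using (Reach.single hload).trans (Reach.single hblue)

section Moves

variable {M : ℕ} {E : Finset (V × V)} {s t : V}

theorem reach_compute_of_load {f : V → Option Pebble} (hst : (s, t) ∈ E)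
    (hs : ∀ x, (x, s) ∉ E) (hfs : f s = none) (hft : f t = some .blue)
    (hM : #(pebbled f) < M) : Reach M ⟨E, f⟩ ⟨E.erase (s, t), f⟩ 1 := by
  have hne : s ≠ t := by rintro rfl; simp_all
  have hload := Step.load (M := M) ⟨E, f⟩ s hfs hM
  have hcomp := Step.compute (M := M) ⟨E, update f s (some .red)⟩ s t hst hs
    (by simp) (by simp [hne.symm, hft])
  have hrem := Step.remove (M := M)
    ⟨E.erase (s, t), update (update f s (some .red)) t (some .blue)⟩ s (by simp [hne])
  convert ((Reach.single hload).trans (Reach.single hcomp)).trans (Reach.single hrem) using 2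
  funext w
  by_cases hws : w = s <;> by_cases hwt : w = t <;> simp_all

theorem reach_enter (hM : 2 ≤ M) (hst : (s, t) ∈ E) (hs : ∀ x, (x, s) ∉ E) (hne : s ≠ t) :
    Reach M ⟨E, pebbleAt s .red⟩ ⟨E.erase (s, t), pebbleAt t .blue⟩ 1 := by
  have hload := Step.load (M := M) ⟨E, pebbleAt s .red⟩ t (by simp [pebbleAt, hne.symm])
    (by rw [pebCount_pebbleAt]; omega)
  have hcomp := Step.compute (M := M) ⟨E, update (pebbleAt s .red) t (some .red)⟩ s t hst hs
    (by simp [pebbleAt, hne]) (by simp)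
  have hrem := Step.remove (M := M)
    ⟨E.erase (s, t), update (update (pebbleAt s .red) t (some .red)) t (some .blue)⟩ s
    (by simp [pebbleAt, hne])
  convert ((Reach.single hload).trans (Reach.single hcomp)).trans (Reach.single hrem) using 2
  funext w
  by_cases hws : w = s <;> by_cases hwt : w = t <;> simp_all [pebbleAt]

theorem reach_exit (hM : 2 ≤ M) (hst : (s, t) ∈ E) (hs : ∀ x, (x, s) ∉ E) (hne : s ≠ t) :
    Reach M ⟨E, pebbleAt t .blue⟩ ⟨E.erase (s, t), pebbleAt s .red⟩ 2 := by
  have hload := Step.load (M := M) ⟨E, pebbleAt t .blue⟩ s (by simp [pebbleAt, hne])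
    (by rw [pebCount_pebbleAt]; omega)
  have hcomp := Step.compute (M := M) ⟨E, update (pebbleAt t .blue) s (some .red)⟩ s t hst hs
    (by simp) (by simp [pebbleAt, hne.symm])
  have hstore := Step.store (M := M)
    ⟨E.erase (s, t), update (update (pebbleAt t .blue) s (some .red)) t (some .blue)⟩ t
    (by simp)
  have hrem := Step.remove (M := M)
    ⟨E.erase (s, t), update (update (update (pebbleAt t .blue) s (some .red)) t (some .blue)) t
      (some .red)⟩ t (by simp)
  convert (((Reach.single hload).trans (Reach.single hcomp)).trans
    (Reach.single hstore)).trans (Reach.single hrem) using 2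
  funext w
  by_cases hws : w = s <;> by_cases hwt : w = t <;> simp_all [pebbleAt]

end Moves

section Bipartite

variable {α β : Type} [DecidableEq α] [DecidableEq β]

def bipartiteEdges (F : Finset (α × β)) : Finset ((β ⊕ α) × (β ⊕ α)) :=
  F.image fun p => (Sum.inr p.1, Sum.inl p.2)

theorem mk_mem_bipartiteEdges {F : Finset (α × β)} {a : α} {b : β} (h : (a, b) ∈ F) :
    (Sum.inr a, Sum.inl b) ∈ bipartiteEdges F :=
  mem_image_of_mem _ h

theorem notMem_bipartiteEdges_inr (F : Finset (α × β)) (a : α) (x : β ⊕ α) :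
    (x, Sum.inr a) ∉ bipartiteEdges F := by
  simp [bipartiteEdges]

theorem bipartiteEdges_erase (F : Finset (α × β)) (a : α) (b : β) :
    bipartiteEdges (F.erase (a, b)) = (bipartiteEdges F).erase (Sum.inr a, Sum.inl b) :=
  image_erase (fun p q h => by simpa [Prod.ext_iff] using h) F (a, b)

variable [Fintype α] [Fintype β] {M : ℕ} {F : Finset (α × β)} {A : Finset α} {t : β}

theorem reach_compute_sources {f : β ⊕ α → Option Pebble} (A : Finset α)
    (hA : A ×ˢ {t} ⊆ F) (hfA : ∀ a ∈ A, f (Sum.inr a) = none)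
    (hft : f (Sum.inl t) = some .blue) (hM : #(pebbled f) < M) :
    Reach M ⟨bipartiteEdges F, f⟩ ⟨bipartiteEdges (F \ A ×ˢ {t}), f⟩ #A := by
  induction A using Finset.induction_on generalizing F with
  | empty => simpa using Reach.refl _
  | insert a A ha ih =>
    have hat : (a, t) ∈ F := hA (by simp)
    have hfirst := reach_compute_of_load (M := M) (mk_mem_bipartiteEdges hat)
      (notMem_bipartiteEdges_inr F a) (hfA a (mem_insert_self a A)) hft hM
    rw [← bipartiteEdges_erase] at hfirst
    have hrest := ih (F := F.erase (a, t))
      (fun p hp => mem_erase.2 ⟨by rintro rfl; simp_all, hA (by aesop)⟩)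
      (fun a' ha' => hfA a' (mem_insert_of_mem ha'))
    rw [card_insert_of_notMem ha, add_comm]
    convert hfirst.trans hrest using 3
    ext ⟨x, y⟩
    simp only [mem_sdiff, mem_erase, mem_product, mem_singleton, mem_insert, ne_eq, Prod.mk.injEq]
    grind

theorem reach_drain (hM : 2 ≤ M) {b : α} (hb : b ∈ A) (hA : A ×ˢ {t} ⊆ F) :
    Reach M ⟨bipartiteEdges F, pebbleAt (Sum.inl t) .blue⟩
      ⟨bipartiteEdges (F \ A ×ˢ {t}), pebbleAt (Sum.inr b) .red⟩ (#A + 1) := by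
  have hsources := reach_compute_sources (M := M) (f := pebbleAt (Sum.inl t) .blue) (A.erase b)
    ((product_subset_product_left (erase_subset b A)).trans hA)
    (fun a _ => by simp [pebbleAt]) (by simp [pebbleAt])
    (by rw [pebbled_pebbleAt, card_singleton]; omega)
  have hexit := reach_exit (M := M) (E := bipartiteEdges (F \ (A.erase b) ×ˢ {t})) hM
    (t := Sum.inl t)
    (mk_mem_bipartiteEdges (by simp [hA (mk_mem_product hb (mem_singleton_self t))]))
    (notMem_bipartiteEdges_inr _ b) (by simp)
  rw [← bipartiteEdges_erase] at hexit
  rw [← card_erase_add_one hb]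
  convert hsources.trans hexit using 3
  ext ⟨x, y⟩
  simp only [mem_sdiff, mem_erase, mem_product, mem_singleton, ne_eq, Prod.mk.injEq]
  grind

theorem reach_pass (hM : 2 ≤ M) {a b : α} (ha : a ∈ A) (hb : b ∈ A) (hab : a ≠ b)
    (hA : A ×ˢ {t} ⊆ F) :
    Reach M ⟨bipartiteEdges F, pebbleAt (Sum.inr a) .red⟩
      ⟨bipartiteEdges (F \ A ×ˢ {t}), pebbleAt (Sum.inr b) .red⟩ (#A + 1) := by
  have henter := reach_enter (M := M) (E := bipartiteEdges F) (t := Sum.inl t) hM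
    (mk_mem_bipartiteEdges (hA (mk_mem_product ha (mem_singleton_self t))))
    (notMem_bipartiteEdges_inr _ a) (by simp)
  rw [← bipartiteEdges_erase] at henter
  have hdrain := reach_drain (M := M) (F := F.erase (a, t)) (t := t) hM
    (mem_erase.2 ⟨hab.symm, hb⟩)    (fun p hp => by aesop)
  rw [← card_erase_add_one ha, add_comm]
  convert henter.trans hdrain using 3
  ext ⟨x, y⟩
  simp only [mem_sdiff, mem_erase, mem_product, mem_singleton, ne_eq, Prod.mk.injEq]
  grind

end Bipartite

section AdjacentPairs

open List

variable {γ : Type*}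

def adjCount (R : γ → γ → Prop) [DecidableRel R] : List γ → ℕ
  | a :: b :: l => (if R a b then 1 else 0) + adjCount R (b :: l)
  | _ => 0

variable (R : γ → γ → Prop) [DecidableRel R]

theorem adjCount_cons_cons (a b : γ) (l : List γ) :
    adjCount R (a :: b :: l) = (if R a b then 1 else 0) + adjCount R (b :: l) := rfl

theorem adjCount_le_length_sub_one : ∀ l : List γ, adjCount R l ≤ l.length - 1
  | [] | [_] => le_rfl
  | a :: b :: l => by
    have := adjCount_le_length_sub_one (b :: l)
    rw [adjCount_cons_cons]
    simp only [length_cons] at this ⊢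
    split <;> omega

variable {R}

theorem isChain_of_length_le_adjCount_add_one :
    ∀ {l : List γ}, l.length ≤ adjCount R l + 1 → l.IsChain R
  | [], _ => .nil
  | [a], _ => .singleton a
  | a :: b :: l, h => by
    have := adjCount_le_length_sub_one R (b :: l)
    rw [adjCount_cons_cons] at h
    simp only [length_cons] at h this
    by_cases hab : R a b
    · simp only [hab, if_true] at h
      exact .cons_cons hab (isChain_of_length_le_adjCount_add_one (by rw [length_cons]; omega))
    · simp only [hab, if_false] at h; omega

theorem head?_destutter' (a : γ) (l : List γ) : (l.destutter' R a).head? = some a := by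
  induction l generalizing a with
  | nil => rfl
  | cons b l ih => rw [destutter'_cons]; split_ifs <;> simp [ih]

variable [DecidableEq γ]

theorem length_destutter_add_adjCount :
    ∀ l : List γ, (l.destutter (· ≠ ·)).length + adjCount (· = ·) l = l.length
  | [] | [_] => rfl
  | a :: b :: l => by
    have ih := length_destutter_add_adjCount (b :: l)
    rw [destutter_cons_cons, adjCount_cons_cons, destutter_cons'] at *
    by_cases hab : a = b
    · subst hab
      rw [if_neg (not_not.2 rfl), if_pos rfl]
      simp only [length_cons] at ih ⊢
      omega
    · rw [if_pos hab, if_neg hab]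
      simp only [length_cons] at ih ⊢
      omega

theorem toFinset_destutter : ∀ l : List γ, (l.destutter (· ≠ ·)).toFinset = l.toFinset
  | [] | [_] => rfl
  | a :: b :: l => by
    have ih := toFinset_destutter (b :: l)
    rw [destutter_cons_cons]
    by_cases hab : a = b
    · subst hab
      rw [if_neg (not_not.2 rfl), ← destutter_cons', ih]
      simp
    · rw [if_pos hab, toFinset_cons, ← destutter_cons', ih]
      simp

theorem isChain_destutter_of_isChain {Q : γ → γ → Prop} :
    ∀ {l : List γ}, l.IsChain (fun x y => x ≠ y → Q x y) →
      (l.destutter (· ≠ ·)).IsChain (fun x y => x ≠ y ∧ Q x y)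
  | [], _ => .nil
  | [a], _ => .singleton a
  | a :: b :: l, h => by
    rw [isChain_cons_cons] at h
    have ih := isChain_destutter_of_isChain h.2
    rw [destutter_cons_cons]
    by_cases hab : a = b
    · subst hab
      rwa [if_neg (not_not.2 rfl)]
    · rw [if_pos hab, isChain_cons]
      refine ⟨?_, ih⟩
      rw [head?_destutter']
      simpa using ⟨hab, h.1 hab⟩

end AdjacentPairs

section Trace

open List

variable {α β : Type} [DecidableEq α] [DecidableEq β]

def savings (cs : List (α × β)) : ℕ :=
  adjCount (· = ·) (cs.map Prod.fst) + 2 * adjCount (· = ·) (cs.map Prod.snd)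

theorem adjCount_map_fst_add_adjCount_map_snd_le :
    ∀ {l : List (α × β)}, l.Nodup → adjCount (· = ·) (l.map Prod.fst) +
      adjCount (· = ·) (l.map Prod.snd) ≤ adjCount (fun p q => p.1 = q.1 ∨ p.2 = q.2) l
  | [], _ | [_], _ => le_rfl
  | p :: q :: l, hl => by
    have hpq : p ≠ q := fun h => (nodup_cons.1 hl).1 (h ▸ mem_cons_self)
    have ih := adjCount_map_fst_add_adjCount_map_snd_le hl.of_cons
    simp only [List.map_cons, adjCount_cons_cons] at ih ⊢
    by_cases h₁ : p.1 = q.1 <;> by_cases h₂ : p.2 = q.2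
    · exact absurd (Prod.ext h₁ h₂) hpq
    all_goals simp only [h₁, h₂, if_true, if_false, or_self, true_or, or_true]; omega

theorem nodup_and_isChain_destutter_of_savings {l : List (α × β)} (hl : l.Nodup)
    (h : 2 * l.length ≤ #(l.map Prod.snd).toFinset + 1 + savings l) :
    ((l.map Prod.snd).destutter (· ≠ ·)).Nodup ∧
      ((l.map Prod.snd).destutter (· ≠ ·)).IsChain
        (fun b b' => b ≠ b' ∧ ∃ a, (a, b) ∈ l ∧ (a, b') ∈ l) := by
  have hlen := length_destutter_add_adjCount (l.map Prod.snd)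
  have hfin := toFinset_destutter (l.map Prod.snd)
  have hcard := toFinset_card_le ((l.map Prod.snd).destutter (· ≠ ·))
  have hpair := adjCount_map_fst_add_adjCount_map_snd_le hl
  have hle := adjCount_le_length_sub_one (fun p q : α × β => p.1 = q.1 ∨ p.2 = q.2) l
  rw [length_map] at hlen
  rw [hfin] at hcard
  unfold savings at h
  refine ⟨Multiset.coe_nodup.1 (Multiset.toFinset_card_eq_card_iff_nodup.1 ?_),
    isChain_destutter_of_isChain ?_⟩
  · change #(List.toFinset _) = List.length _
    rw [hfin]
    omega
  · rw [isChain_map]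
    refine (isChain_of_length_le_adjCount_add_one
      (R := fun p q : α × β => p.1 = q.1 ∨ p.2 = q.2) (by omega)).imp_of_mem_imp ?_
    rintro ⟨a, b⟩ ⟨a', b'⟩ hp hq hpq hne
    obtain rfl : a = a' := hpq.resolve_right hne
    exact ⟨a, hp, hq⟩

end Trace

section AmortizedCost

open List

variable {α β : Type}

-- A trace lists the computed pairs `(source, target)`, most recent first.
def lastDirty : List (α × β) → (β ⊕ α → Option Pebble) → ℕ
  | [], _ => 0
  | p :: _, f => if f (Sum.inl p.2) = some .blue then 1 else 0

theorem lastDirty_le_one (cs : List (α × β)) (f : β ⊕ α → Option Pebble) :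
    lastDirty cs f ≤ 1 := by
  cases cs <;> simp only [lastDirty] <;> (try split_ifs) <;> omega

theorem lastDirty_eq_zero {f : β ⊕ α → Option Pebble} (hf : ∀ v, f v ≠ some .blue)
    (cs : List (α × β)) : lastDirty cs f = 0 := by
  cases cs <;> simp [lastDirty, hf]

variable [DecidableEq α] [DecidableEq β]

def lastEnds : List (α × β) → Finset (β ⊕ α)
  | [] => ∅
  | p :: _ => {Sum.inr p.1, Sum.inl p.2}

theorem lastDirty_le_update {f : β ⊕ α → Option Pebble} {v : β ⊕ α}
    (hv : f v ≠ some .blue) (o : Option Pebble) (cs : List (α × β)) :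
    lastDirty cs f ≤ lastDirty cs (update f v o) := by
  cases cs with
  | nil => exact le_rfl
  | cons p cs =>
    by_cases h : Sum.inl p.2 = v
    · subst h; simp [lastDirty, hv]
    · simp [lastDirty, update_of_ne h]

theorem savings_cons_cons (a : α) (b : β) (p : α × β) (cs : List (α × β)) :
    savings ((a, b) :: p :: cs) =
      (if a = p.1 then 1 else 0) + 2 * (if b = p.2 then 1 else 0) + savings (p :: cs) := by
  simp only [savings, List.map_cons, adjCount_cons_cons]
  ring

theorem card_pair_sdiff_pair (a a' : α) (b b' : β) :
    #(({Sum.inr a, Sum.inl b} : Finset (β ⊕ α)) \ {Sum.inr a', Sum.inl b'}) =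
      (if a = a' then 0 else 1) + (if b = b' then 0 else 1) := by
  by_cases ha : a = a' <;> by_cases hb : b = b' <;> subst_vars <;>
    simp [insert_sdiff_of_mem, insert_sdiff_of_notMem, sdiff_eq_empty_iff_subset,
      sdiff_eq_self_of_disjoint, *]

variable [Fintype α] [Fintype β]

theorem two_add_lastDirty_le {f : β ⊕ α → Option Pebble} {a : α} {b : β}
    (cs : List (α × β)) (hf : pebbled f = {Sum.inr a, Sum.inl b}) :
    2 + lastDirty cs f + savings cs ≤ #(pebbled f \ lastEnds cs) + savings ((a, b) :: cs) := by
  rcases cs with _ | ⟨⟨a', b'⟩, cs⟩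
  · simp [hf, lastEnds, lastDirty, savings, adjCount]
  · have hdirty : lastDirty ((a', b') :: cs) f ≤ if b = b' then 1 else 0 := by
      simp only [lastDirty]
      split_ifs with h₁ h₂ <;> try omega
      have : Sum.inl b' ∈ pebbled f := by simp [pebbled, h₁]
      simp [hf, Ne.symm h₂] at this
    rw [savings_cons_cons, hf, lastEnds, card_pair_sdiff_pair]
    split_ifs at hdirty ⊢ <;> omega

/-- Each computed pair is charged 3: loading its source, loading its target, storing its target.
Pebbles off the last computed edge are paid for but not charged yet; a dirty last target is
charged a store that is not paid yet. -/
def AmortizedBound (F : Finset (α × β)) (c : Config (β ⊕ α)) (k : ℕ) : Prop :=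
  ∃ cs : List (α × β), cs.Nodup ∧ (∀ p ∈ cs, p ∈ F) ∧
    c.edges = bipartiteEdges (F \ cs.toFinset) ∧
    3 * cs.length + #(pebbled c.peb \ lastEnds cs) ≤ k + lastDirty cs c.peb + savings cs

theorem card_insert_sdiff_le {γ : Type*} [DecidableEq γ] (v : γ) (P L : Finset γ) :
    #(insert v P \ L) ≤ #(P \ L) + 1 := by
  by_cases hv : v ∈ L
  · rw [insert_sdiff_of_mem _ hv]; omega
  · rw [insert_sdiff_of_notMem _ hv]; exact card_insert_le _ _

theorem AmortizedBound.of_peb {F : Finset (α × β)} {E : Finset ((β ⊕ α) × (β ⊕ α))}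
    {f f' : β ⊕ α → Option Pebble} {k k' : ℕ} (h : AmortizedBound F ⟨E, f⟩ k)
    (hf : ∀ cs : List (α × β), #(pebbled f' \ lastEnds cs) + lastDirty cs f ≤
      #(pebbled f \ lastEnds cs) + lastDirty cs f' + k') :
    AmortizedBound F ⟨E, f'⟩ (k + k') := by
  obtain ⟨cs, hnd, hF, hedges, hbound⟩ := h
  have := hf cs
  exact ⟨cs, hnd, hF, hedges, by dsimp only at hbound ⊢; omega⟩

theorem AmortizedBound.compute {F : Finset (α × β)} {c : Config (β ⊕ α)} {k : ℕ}
    {u v : β ⊕ α} (h : AmortizedBound F c k) (hc : pebCount c ≤ 2) (he : (u, v) ∈ c.edges)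
    (hu : (c.peb u).isSome) (hv : (c.peb v).isSome) :
    AmortizedBound F ⟨c.edges.erase (u, v), update c.peb v (some .blue)⟩ k := by
  obtain ⟨cs, hnd, hF, hedges, hbound⟩ := h
  rw [hedges] at he
  obtain ⟨⟨a, b⟩, hab, huv⟩ := mem_image.1 he
  obtain ⟨rfl, rfl⟩ := Prod.mk.inj huv
  rw [mem_sdiff, List.mem_toFinset] at hab
  have hpeb : pebbled c.peb = {Sum.inr a, Sum.inl b} :=
    (eq_of_subset_of_card_le (insert_subset (by simp [hu]) (by simp [hv]))
      (hc.trans (card_pair (by simp)).ge)).symm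
  have hkey := two_add_lastDirty_le cs hpeb
  refine ⟨(a, b) :: cs, nodup_cons.2 ⟨hab.2, hnd⟩, forall_mem_cons.2 ⟨hab.1, hF⟩,
    ?_, ?_⟩
  · rw [hedges, ← bipartiteEdges_erase, toFinset_cons, sdiff_insert]
  · dsimp only
    rw [pebbled_update_of_isSome hv, hpeb]
    simp only [lastEnds, lastDirty, sdiff_self, bot_eq_empty, card_empty, update_self,
      length_cons, if_true]
    omega

theorem AmortizedBound.step {F : Finset (α × β)} {c c' : Config (β ⊕ α)} {k k' : ℕ}
    (h : AmortizedBound F c k) (hc : pebCount c ≤ 2) (hs : Step 2 c c' k') :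
    AmortizedBound F c' (k + k') := by
  cases hs with
  | load v hv _ =>
    refine h.of_peb fun cs => ?_
    have := card_insert_sdiff_le v (pebbled c.peb) (lastEnds cs)
    have := lastDirty_le_update (f := c.peb) (v := v) (by simp [hv]) (some .red) cs
    rw [pebbled_update_some]
    omega
  | remove v hv =>
    refine h.of_peb fun cs => ?_
    have : #((pebbled c.peb).erase v \ lastEnds cs) ≤ #(pebbled c.peb \ lastEnds cs) :=
      card_le_card (sdiff_subset_sdiff (erase_subset _ _) le_rfl)
    have := lastDirty_le_update (f := c.peb) (v := v) (by simp [hv]) none cs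
    rw [pebbled_update_none]
    omega
  | toBlue v hv =>
    refine h.of_peb fun cs => ?_
    have := lastDirty_le_update (f := c.peb) (v := v) (by simp [hv]) (some .blue) cs
    rw [pebbled_update_of_isSome (by simp [hv])]
    omega
  | store v hv =>
    refine h.of_peb fun cs => ?_
    have := lastDirty_le_one cs c.peb
    rw [pebbled_update_of_isSome (by simp [hv])]
    omega
  | compute u v he _ hu hv => simpa using h.compute hc he hu hv

theorem Reach.amortizedBound {F : Finset (α × β)} {c : Config (β ⊕ α)} {k : ℕ}
    (h : Reach 2 ⟨bipartiteEdges F, fun _ => none⟩ c k) : AmortizedBound F c k := by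
  induction h with
  | refl => exact ⟨[], nodup_nil, by simp, by simp, by simp [pebbled]⟩
  | tail hr hs ih => exact ih.step (hr.pebCount_le (by simp [pebCount])) hs

theorem exists_trace_of_mem_achievable {F : Finset (α × β)} {k : ℕ}
    (hk : k ∈ Achievable 2 (bipartiteEdges F)) :
    ∃ cs : List (α × β), cs.Nodup ∧ cs.toFinset = F ∧
      3 * cs.length ≤ k + savings cs := by
  obtain ⟨c, hr, hempty, hblue⟩ := hk
  obtain ⟨cs, hnd, hF, hedges, hbound⟩ := hr.amortizedBound
  refine ⟨cs, hnd, ?_, ?_⟩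
  · rw [hempty, eq_comm, bipartiteEdges, image_eq_empty, sdiff_eq_empty_iff_subset] at hedges
    exact Subset.antisymm (fun p hp => hF p (List.mem_toFinset.1 hp)) hedges
  · rw [lastDirty_eq_zero hblue] at hbound
    omega

end AmortizedCost

theorem exists_perm_adj_iff_exists_list {n : ℕ} (R : Fin n → Fin n → Prop) :
    (∃ σ : Equiv.Perm (Fin n), ∀ (i : ℕ) (h : i + 1 < n),
      R (σ ⟨i, Nat.lt_of_succ_lt h⟩) (σ ⟨i + 1, h⟩)) ↔
      ∃ D : List (Fin n), D.Nodup ∧ (∀ x, x ∈ D) ∧ D.IsChain R := by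
  simp only [← List.isChain_ofFn]
  constructor
  · rintro ⟨σ, hσ⟩
    exact ⟨List.ofFn σ, List.nodup_ofFn.2 σ.injective,
      fun x => by simpa using ⟨σ.symm x, σ.apply_symm_apply x⟩, hσ⟩
  · rintro ⟨D, hnd, hmem, hchain⟩
    have hlen : D.length = n := by
      rw [← List.toFinset_card_of_nodup hnd,
        eq_univ_of_forall fun x => List.mem_toFinset.2 (hmem x), card_univ, Fintype.card_fin]
    refine ⟨(finCongr hlen.symm).trans (hnd.getEquivOfForallMemList D hmem), ?_⟩
    convert hchain
    exact List.ext_getElem (by simp [hlen]) (fun i _ _ => by simp)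

section Gadget

variable {n : ℕ} (G : SimpleGraph (Fin n)) [DecidableRel G.Adj]

theorem src_injective (i : Fin n) : Function.Injective (src G i) := by
  intro j j' h
  unfold src at h
  split_ifs at h with h₁ h₂ h₂ <;> simp only [Prod.mk.injEq] at h
  · exact h.1
  · exact absurd h₁.2 (by rw [h.1]; exact lt_irrefl i)
  · exact absurd h₂.2 (by rw [← h.1]; exact lt_irrefl i)
  · exact h.2

theorem src_comm {i j : Fin n} (h : G.Adj i j) : src G i j = src G j i := by
  unfold src
  rcases lt_or_gt_of_ne (G.ne_of_adj h) with hlt | hlt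
  · rw [if_neg (fun hc => absurd hc.2 (not_lt.2 hlt.le)), if_pos ⟨h.symm, hlt⟩]
  · rw [if_pos ⟨h, hlt⟩, if_neg (fun hc => absurd hc.2 (not_lt.2 hlt.le))]

theorem adj_of_src_eq {i i' j j' : Fin n} (hne : i ≠ i') (h : src G i j = src G i' j') :
    G.Adj i i' := by
  unfold src at h
  split_ifs at h with h₁ h₂ h₂ <;> simp only [Prod.mk.injEq] at h
  · exact absurd h.2 hne
  · exact h.1 ▸ h₁.1
  · rw [h.1]; exact h₂.1.symm
  · exact absurd h.1 hne

def gadgetSources (i : Fin n) : Finset (Fin n × Fin n) :=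
  univ.image (src G i)

theorem src_mem_gadgetSources (i j : Fin n) : src G i j ∈ gadgetSources G i :=
  mem_image_of_mem _ (mem_univ j)

theorem card_gadgetSources (i : Fin n) : #(gadgetSources G i) = n := by
  rw [gadgetSources, card_image_of_injective _ (src_injective G i), card_univ, Fintype.card_fin]

def gadgetPairs (s : Finset (Fin n)) : Finset ((Fin n × Fin n) × Fin n) :=
  s.biUnion fun i => gadgetSources G i ×ˢ {i}

theorem mem_gadgetPairs {x : Fin n × Fin n} {i : Fin n} {s : Finset (Fin n)} :
    (x, i) ∈ gadgetPairs G s ↔ i ∈ s ∧ x ∈ gadgetSources G i := by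
  simp only [gadgetPairs, mem_biUnion, mem_product, mem_singleton]
  constructor
  · rintro ⟨j, hj, hx, rfl⟩
    exact ⟨hj, hx⟩
  · rintro ⟨hi, hx⟩
    exact ⟨i, hi, hx, rfl⟩

theorem gadgetEdges_eq : gadgetEdges G = bipartiteEdges (gadgetPairs G univ) := by
  ext ⟨u, v⟩
  simp [gadgetEdges, bipartiteEdges, gadgetPairs, gadgetSources]

theorem gadgetSources_product_subset {i : Fin n} {s : Finset (Fin n)} (hi : i ∈ s) :
    gadgetSources G i ×ˢ {i} ⊆ gadgetPairs G s :=
  subset_biUnion_of_mem (fun i => gadgetSources G i ×ˢ {i}) hi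

theorem gadgetPairs_insert_sdiff {i : Fin n} {s : Finset (Fin n)} (hi : i ∉ s) :
    gadgetPairs G (insert i s) \ gadgetSources G i ×ˢ {i} = gadgetPairs G s := by
  ext ⟨x, j⟩
  simp only [mem_sdiff, mem_gadgetPairs, mem_insert, mem_product, mem_singleton]
  by_cases hj : j = i
  · subst hj; simp [hi]
  · simp [hj]

theorem card_gadgetPairs_univ : #(gadgetPairs G univ) = n * n := by
  rw [gadgetPairs, card_biUnion]
  · simp [card_gadgetSources]
  · intro i _ j _ hij
    rw [Function.onFun, disjoint_left]
    rintro ⟨x, k⟩ hi hj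
    simp only [mem_product, mem_singleton] at hi hj
    exact hij (hi.2.symm.trans hj.2)

end Gadget

section Hamiltonian

open List

variable {n : ℕ} (G : SimpleGraph (Fin n)) [DecidableRel G.Adj]

-- Gadget `p` is left through the source it shares with the next vertex, or through its own
-- source `s_pp` when it is the last one.
theorem exists_reach_clear_of_path : ∀ (l : List (Fin n)) (p : Fin n), (p :: l).Nodup →
    (p :: l).IsChain G.Adj → ∃ c : Config (Fin n ⊕ Fin n × Fin n),
      Reach 2 ⟨bipartiteEdges (gadgetPairs G l.toFinset),
        pebbleAt (Sum.inr (src G p (l.headD p))) .red⟩ c ((n + 1) * l.length) ∧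
      c.edges = ∅ ∧ ∀ v, c.peb v ≠ some .blue
  | [], p, _, _ => ⟨_, .refl _, by simp [gadgetPairs, bipartiteEdges], pebbleAt_ne_blue _⟩
  | j :: l, p, hnd, hchain => by
    have hpj : G.Adj p j := (isChain_cons_cons.1 hchain).1
    have hj : j ∉ l := (nodup_cons.1 hnd.of_cons).1
    have hne : p ≠ l.headD j := by
      have hp : p ∉ j :: l := (nodup_cons.1 hnd).1
      cases l with
      | nil => exact hpj.ne
      | cons k l => exact fun h => hp (h ▸ mem_cons_of_mem j mem_cons_self)
    have hpass := reach_pass (M := 2) (t := j) (F := gadgetPairs G (j :: l).toFinset) le_rfl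
      (src_mem_gadgetSources G j p) (src_mem_gadgetSources G j (l.headD j))
      ((src_injective G j).ne hne)
      (gadgetSources_product_subset G (mem_toFinset.2 mem_cons_self))
    rw [toFinset_cons, gadgetPairs_insert_sdiff G (by simpa using hj), card_gadgetSources,
      ← src_comm G hpj] at hpass
    obtain ⟨c, hreach, hc⟩ := exists_reach_clear_of_path l j hnd.of_cons hchain.tail
    refine ⟨c, ?_, hc⟩
    rw [toFinset_cons, headD_cons, length_cons, mul_add_one, add_comm]
    exact hpass.trans hreach

theorem exists_mem_achievable_of_path {D : List (Fin n)} (hnd : D.Nodup) (hmem : ∀ x, x ∈ D)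
    (hchain : D.IsChain G.Adj) : ∃ k ∈ Achievable 2 (gadgetEdges G), k ≤ n ^ 2 + n + 1 := by
  rcases D with _ | ⟨i, l⟩
  · have : IsEmpty (Fin n) := ⟨fun x => by simpa using hmem x⟩
    exact ⟨0, ⟨_, .refl _, by simp [gadgetEdges], by simp⟩, by omega⟩
  · have huniv : (univ : Finset (Fin n)) = insert i l.toFinset := by
      ext x; simpa using hmem x
    have hlen : l.length + 1 = n := by
      rw [← length_cons, ← toFinset_card_of_nodup hnd, toFinset_cons, ← huniv, card_univ,
        Fintype.card_fin]
    have hstart := reach_pebbleAt_blue (M := 2) (by norm_num)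
      (bipartiteEdges (gadgetPairs G (insert i l.toFinset))) (Sum.inl i)
    have hdrain := reach_drain (M := 2) le_rfl (src_mem_gadgetSources G i (l.headD i))
      (gadgetSources_product_subset G (mem_insert_self i l.toFinset))
    rw [gadgetPairs_insert_sdiff G (by simpa using (nodup_cons.1 hnd).1),
      card_gadgetSources] at hdrain
    obtain ⟨c, hreach, hc⟩ := exists_reach_clear_of_path G l i hnd hchain
    refine ⟨1 + (n + 1 + (n + 1) * l.length), ⟨c, ?_, hc⟩, ?_⟩
    · rw [gadgetEdges_eq, huniv]
      exact hstart.trans (hdrain.trans hreach)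
    · have : (n + 1) * l.length + (n + 1) = n ^ 2 + n := by
        rw [← mul_add_one, hlen]
        ring
      omega

theorem exists_path_of_mem_achievable {k : ℕ} (hk : k ∈ Achievable 2 (gadgetEdges G))
    (hkn : k ≤ n ^ 2 + n + 1) :
    ∃ D : List (Fin n), D.Nodup ∧ (∀ x, x ∈ D) ∧ D.IsChain G.Adj := by
  rw [gadgetEdges_eq] at hk
  obtain ⟨cs, hnd, hcs, hcost⟩ := exists_trace_of_mem_achievable hk
  have hlen : cs.length = n * n := by
    rw [← toFinset_card_of_nodup hnd, hcs, card_gadgetPairs_univ]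
  have htargets : (cs.map Prod.snd).toFinset = univ := by
    refine eq_univ_of_forall fun i => mem_toFinset.2 (mem_map.2 ⟨(src G i i, i), ?_, rfl⟩)
    rw [← mem_toFinset, hcs, mem_gadgetPairs]
    exact ⟨mem_univ i, src_mem_gadgetSources G i i⟩
  obtain ⟨hDnd, hDchain⟩ := nodup_and_isChain_destutter_of_savings hnd
    (by rw [htargets, card_univ, Fintype.card_fin, hlen]; linarith)
  refine ⟨_, hDnd, fun x => ?_, hDchain.imp ?_⟩
  · rw [← mem_toFinset, toFinset_destutter, htargets]
    exact mem_univ x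
  · rintro b b' ⟨hne, a, hab, hab'⟩
    rw [← mem_toFinset, hcs, mem_gadgetPairs] at hab hab'
    obtain ⟨j, -, rfl⟩ := mem_image.1 hab.2
    obtain ⟨j', -, hj'⟩ := mem_image.1 hab'.2
    exact adj_of_src_eq G hne hj'.symm

end Hamiltonian

/-- `G` has a Hamiltonian path iff there is a pebbling strategy in the
`(2,1)`-I/O model with partial computations that eliminates all edges of the gadget graph
`G'` (storing all results) with total cost at most `n² + n + 1`. -/
theorem stmt13 (n : ℕ) (G : SimpleGraph (Fin n)) [DecidableRel G.Adj] :
    (∃ σ : Equiv.Perm (Fin n), ∀ (i : ℕ) (h : i + 1 < n),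
        G.Adj (σ ⟨i, by omega⟩) (σ ⟨i + 1, h⟩)) ↔
      ∃ k ∈ Achievable 2 (gadgetEdges G), k ≤ n ^ 2 + n + 1 := by
  rw [exists_perm_adj_iff_exists_list]
  exact ⟨fun ⟨_, hnd, hmem, hchain⟩ => exists_mem_achievable_of_path G hnd hmem hchain,
    fun ⟨_, hk, hkn⟩ => exists_path_of_mem_achievable G hk hkn⟩
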